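/- (Differentiability of the dual function.) Assume the SDR problem is strictly feasible and that for every x ∈ ℝ^M with x ≥ 0 componentwise, the subproblem defining d(x) attains its infimum at a unique point (V*₁(x), …, V*_K(x), Q*(x)). Then d is differentiable on the nonnegative orthant ℝ₊^M (at boundary points, differentiability is understood within ℝ₊^M), and for every x ≥ 0 and every m = 1,…,M the m-th component of the gradient is (∇d(x))_m = Σ_{k=1}^K V*_k(x)^{(m,m)} + Q*(x)^{(m,m)} − P̄_m. -/

import Mathlib

open BigOperators Matrix ComplexOrder

noncomputable section

/-- The matrix `B_m(V, Q)` appearing in the fronthaul-rate constraint. -/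
def Bmat {M K : ℕ} (Cbar : Fin M → ℝ)
    (V : Fin K → Matrix (Fin M) (Fin M) ℂ) (Q : Matrix (Fin M) (Fin M) ℂ)
    (m : Fin M) : Matrix (Fin M) (Fin M) ℂ :=
  fun s t =>
    if s = m ∧ t = m then
      Q m m - (((2 : ℝ) ^ (-(Cbar m)) : ℝ) : ℂ) * ((∑ k, V k m m) + Q m m)
    else if m ≤ s ∧ m ≤ t then Q s t
    else 0

/-- Feasibility for the Lagrangian subproblem (no per-antenna power constraints). -/
def SubFeasible {M K : ℕ} (hvec : Fin K → Fin M → ℂ) (σ γbar : Fin K → ℝ)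
    (Cbar : Fin M → ℝ)
    (V : Fin K → Matrix (Fin M) (Fin M) ℂ) (Q : Matrix (Fin M) (Fin M) ℂ) : Prop :=
  (∀ k, (V k).PosSemidef) ∧ Q.PosSemidef ∧
  (∀ k, σ k ^ 2 ≤
    (star (hvec k) ⬝ᵥ
      ((((1 + 1 / γbar k : ℝ) : ℂ) • V k - (∑ j, V j) - Q) *ᵥ hvec k)).re) ∧
  (∀ m, (Bmat Cbar V Q m).PosSemidef)

/-- Objective of the Lagrangian subproblem for multiplier `x ≥ 0`. -/
def dualObj {M K : ℕ} (Pbar : Fin M → ℝ) (x : EuclideanSpace ℝ (Fin M))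
    (V : Fin K → Matrix (Fin M) (Fin M) ℂ) (Q : Matrix (Fin M) (Fin M) ℂ) : ℝ :=
  ∑ m, ((1 + x m) * ((∑ k, V k m m).re + (Q m m).re) - x m * Pbar m)

/-- The dual function `d(x)`: infimum of the subproblem objective over its feasible set. -/
def dfun {M K : ℕ} (hvec : Fin K → Fin M → ℂ) (σ γbar : Fin K → ℝ)
    (Cbar Pbar : Fin M → ℝ) (x : EuclideanSpace ℝ (Fin M)) : ℝ :=
  sInf {v : ℝ | ∃ (V : Fin K → Matrix (Fin M) (Fin M) ℂ)
    (Q : Matrix (Fin M) (Fin M) ℂ),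
      SubFeasible hvec σ γbar Cbar V Q ∧ v = dualObj Pbar x V Q}

/-- Feasibility for the SDR problem (with per-antenna power constraints). -/
def SDRFeasible {M K : ℕ} (hvec : Fin K → Fin M → ℂ) (σ γbar : Fin K → ℝ)
    (Cbar Pbar : Fin M → ℝ)
    (V : Fin K → Matrix (Fin M) (Fin M) ℂ) (Q : Matrix (Fin M) (Fin M) ℂ) : Prop :=
  SubFeasible hvec σ γbar Cbar V Q ∧
  (∀ m, (∑ k, V k m m).re + (Q m m).re ≤ Pbar m)

/-- Strict feasibility of the SDR problem. -/
def SDRStrictFeasible {M K : ℕ} (hvec : Fin K → Fin M → ℂ) (σ γbar : Fin K → ℝ)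
    (Cbar Pbar : Fin M → ℝ) : Prop :=
  ∃ (V : Fin K → Matrix (Fin M) (Fin M) ℂ) (Q : Matrix (Fin M) (Fin M) ℂ),
    SDRFeasible hvec σ γbar Cbar Pbar V Q ∧
    (∀ k, (V k).PosDef) ∧ Q.PosDef ∧
    (∀ k, σ k ^ 2 <
      (star (hvec k) ⬝ᵥ
        ((((1 + 1 / γbar k : ℝ) : ℂ) • V k - (∑ j, V j) - Q) *ᵥ hvec k)).re) ∧
    (∀ m, (∑ k, V k m m).re + (Q m m).re < Pbar m) ∧
    (∀ m : Fin M,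
      (((Bmat Cbar V Q m).submatrix
        (fun i : {s : Fin M // m ≤ s} => (i : Fin M))
        (fun i : {s : Fin M // m ≤ s} => (i : Fin M))).PosDef))

/-!
Danskin's argument. The dual function is an infimum of functions affine in the multiplier, so the
minimizer at `y` gives the supergradient inequality `d z ≤ d y + ⟪g y, z - y⟫`, where `g y` is the
gradient in `x` of the objective at that minimizer; a function with a supergradient field that is
continuous at `x` is differentiable there with gradient `g x`. Continuity of `g` comes from
continuity of the minimizer, which follows from uniqueness: comparing with the minimizer at `x`
bounds the per-antenna powers near `x`, the entries of a positive semidefinite matrix are bounded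
by its diagonal, so the minimizers stay in a compact box, and every cluster point is a feasible
minimizer at `x` because the feasible set is closed.
-/

open Filter Topology
open scoped InnerProductSpace

theorem hasGradientWithinAt_of_supergradient {E : Type*} [NormedAddCommGroup E]
    [InnerProductSpace ℝ E] [CompleteSpace E] {F : E → ℝ} {g : E → E} {S : Set E} {x : E}
    (hx : x ∈ S) (hsup : ∀ y ∈ S, ∀ z ∈ S, F z ≤ F y + ⟪g y, z - y⟫_ℝ)
    (hg : ContinuousWithinAt g S x) :
    HasGradientWithinAt F (g x) S x := by
  rw [hasGradientWithinAt_iff_isLittleO, Asymptotics.isLittleO_iff]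
  intro ε hε
  filter_upwards [self_mem_nhdsWithin, hg (Metric.closedBall_mem_nhds (g x) hε)] with y hy hgy
  have hupper := hsup x hx y hy
  have hlower := hsup y hy x hx
  rw [← neg_sub y x, inner_neg_right] at hlower
  have hgap : |⟪g y - g x, y - x⟫_ℝ| ≤ ε * ‖y - x‖ :=
    (abs_real_inner_le_norm _ _).trans
      (mul_le_mul_of_nonneg_right (by simpa [dist_eq_norm] using hgy) (norm_nonneg _))
  rw [inner_sub_left] at hgap
  rw [Real.norm_eq_abs, abs_le]
  constructor <;> linarith [abs_le.mp hgap]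

theorem tendsto_nhds_of_unique_minimizer {α P : Type*} [TopologicalSpace P] {l : Filter α}
    {p : α → P} {p₀ : P} {C K : Set P} {φ : P → ℝ} (hC : IsClosed C) (hK : IsCompact K)
    (hφ : Continuous φ) (hpC : ∀ᶠ a in l, p a ∈ C) (hpK : ∀ᶠ a in l, p a ∈ K)
    (hφp : ∀ ε > 0, ∀ᶠ a in l, φ (p a) ≤ φ p₀ + ε)
    (huniq : ∀ q ∈ C, φ q ≤ φ p₀ → q = p₀) :
    Tendsto p l (𝓝 p₀) := by
  refine hK.tendsto_nhds_of_unique_mapClusterPt hpK fun q _ hq => huniq q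
    (hC.mem_of_mapClusterPt hq hpC) (le_of_forall_pos_le_add fun ε hε => ?_)
  exact (isClosed_le hφ continuous_const).mem_of_mapClusterPt hq (hφp ε hε)

theorem hasGradientWithinAt_of_unique_minimizer {E P : Type*} [NormedAddCommGroup E]
    [InnerProductSpace ℝ E] [CompleteSpace E] [TopologicalSpace P]
    {L : E → P → ℝ} {G : P → E} {C K : Set P} {S : Set E} {F : E → ℝ} {p : E → P} {x : E}
    (hL : ∀ y z q, L z q = L y q + ⟪G q, z - y⟫_ℝ) (hLx : Continuous (L x))
    (hG : Continuous G) (hC : IsClosed C) (hK : IsCompact K) (hx : x ∈ S)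
    (hpC : ∀ y ∈ S, p y ∈ C) (hmin : ∀ y ∈ S, IsMinOn (L y) C (p y))
    (hF : ∀ y ∈ S, F y = L y (p y)) (huniq : ∀ q ∈ C, L x q ≤ L x (p x) → q = p x)
    (hpK : ∀ᶠ y in 𝓝[S] x, p y ∈ K) :
    HasGradientWithinAt F (G (p x)) S x := by
  have hsup : ∀ y ∈ S, ∀ z ∈ S, F z ≤ F y + ⟪G (p y), z - y⟫_ℝ := fun y hy z hz =>
    calc F z = L z (p z) := hF z hz
      _ ≤ L z (p y) := hmin z hz (hpC y hy)
      _ = F y + ⟪G (p y), z - y⟫_ℝ := by rw [hL y, hF y hy]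
  obtain ⟨B, -, hB⟩ := (hK.image hG).isBounded.exists_pos_norm_le
  have hgap : Tendsto (fun y => ⟪G (p x) - G (p y), y - x⟫_ℝ) (𝓝[S] x) (𝓝 0) := by
    refine squeeze_zero_norm' ?_ ((tendsto_iff_norm_sub_tendsto_zero.mp
      (tendsto_id (x := 𝓝[S] x) |>.mono_right nhdsWithin_le_nhds)).const_mul (B + B) |>.trans
      (by simp))
    filter_upwards [hpK] with y hy
    refine (norm_inner_le_norm _ _).trans (mul_le_mul_of_nonneg_right ?_ (norm_nonneg _))
    exact (norm_sub_le _ _).trans (add_le_add (hB _ ⟨p x, hpK.self_of_nhdsWithin hx, rfl⟩)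
      (hB _ ⟨p y, hy, rfl⟩))
  have hφ : ∀ ε > 0, ∀ᶠ y in 𝓝[S] x, L x (p y) ≤ L x (p x) + ε := by
    intro ε hε
    filter_upwards [self_mem_nhdsWithin, (tendsto_order.mp hgap).2 ε hε] with y hy hyε
    have hxy := hsup x hx y hy
    rw [inner_sub_left] at hyε
    rw [hL y x, ← hF y hy, ← hF x hx, ← neg_sub y x, inner_neg_right]
    linarith
  have hp : Tendsto p (𝓝[S] x) (𝓝 (p x)) :=
    tendsto_nhds_of_unique_minimizer hC hK hLx (eventually_nhdsWithin_of_forall hpC) hpK hφ huniq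
  exact hasGradientWithinAt_of_supergradient hx hsup (hG.continuousAt.tendsto.comp hp)

theorem Matrix.isClosed_setOf_posSemidef {n R : Type*} [Fintype n] [Ring R] [PartialOrder R]
    [StarRing R] [TopologicalSpace R] [IsTopologicalRing R] [ContinuousStar R]
    [OrderClosedTopology R] :
    IsClosed {A : Matrix n n R | A.PosSemidef} := by
  simp only [posSemidef_iff_dotProduct_mulVec, Set.ofPred_and, Set.ofPred_forall]
  refine (isClosed_eq continuous_id.matrix_conjTranspose continuous_id).inter
    (isClosed_iInter fun x => isClosed_le continuous_const ?_)
  exact continuous_const.dotProduct (continuous_id.matrix_mulVec continuous_const)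

theorem Matrix.PosSemidef.norm_sq_apply_le {n 𝕜 : Type*} [Fintype n] [RCLike 𝕜]
    {A : Matrix n n 𝕜} (hA : A.PosSemidef) (s t : n) :
    ‖A s t‖ ^ 2 ≤ RCLike.re (A s s) * RCLike.re (A t t) := by
  have hdet := (hA.submatrix ![s, t]).det_nonneg
  rw [det_fin_two] at hdet
  simp only [submatrix_apply, Matrix.cons_val_zero, Matrix.cons_val_one] at hdet
  rw [← hA.1.apply t s, RCLike.star_def, RCLike.mul_conj, ← hA.1.coe_re_apply_self s,
    ← hA.1.coe_re_apply_self t, ← RCLike.ofReal_mul, ← RCLike.ofReal_pow, ← RCLike.ofReal_sub,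
    RCLike.ofReal_nonneg] at hdet
  linarith

theorem Matrix.PosSemidef.norm_apply_le {n 𝕜 : Type*} [Fintype n] [RCLike 𝕜]
    {A : Matrix n n 𝕜} (hA : A.PosSemidef) {c : ℝ} (hdiag : ∀ i, RCLike.re (A i i) ≤ c)
    (s t : n) : ‖A s t‖ ≤ c := by
  have hs : 0 ≤ RCLike.re (A s s) := (RCLike.nonneg_iff.mp hA.diag_nonneg).1
  have ht : 0 ≤ RCLike.re (A t t) := (RCLike.nonneg_iff.mp hA.diag_nonneg).1
  have hc : 0 ≤ c := hs.trans (hdiag s)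
  refine (sq_le_sq₀ (norm_nonneg _) hc).mp ((hA.norm_sq_apply_le s t).trans ?_)
  rw [sq]
  exact mul_le_mul (hdiag s) (hdiag t) ht hc

section

abbrev Covariances (M K : ℕ) : Type :=
  (Fin K → Matrix (Fin M) (Fin M) ℂ) × Matrix (Fin M) (Fin M) ℂ

variable {M K : ℕ}

theorem continuous_bmat (Cbar : Fin M → ℝ) (m : Fin M) :
    Continuous fun q : Covariances M K => Bmat Cbar q.1 q.2 m := by
  refine continuous_pi fun s => continuous_pi fun t => ?_
  simp only [Bmat]
  split_ifs <;> fun_prop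

theorem isClosed_setOf_subFeasible (hvec : Fin K → Fin M → ℂ) (σ γbar : Fin K → ℝ)
    (Cbar : Fin M → ℝ) :
    IsClosed {q : Covariances M K | SubFeasible hvec σ γbar Cbar q.1 q.2} := by
  simp only [SubFeasible, Set.ofPred_and, Set.ofPred_forall]
  refine (isClosed_iInter fun k => isClosed_setOf_posSemidef.preimage (by fun_prop)).inter
    ((isClosed_setOf_posSemidef.preimage continuous_snd).inter
    ((isClosed_iInter fun k => isClosed_le continuous_const ?_).inter
    (isClosed_iInter fun m => isClosed_setOf_posSemidef.preimage (continuous_bmat Cbar m))))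
  fun_prop

def txPower (V : Fin K → Matrix (Fin M) (Fin M) ℂ) (Q : Matrix (Fin M) (Fin M) ℂ) (m : Fin M) :
    ℝ :=
  (∑ k, V k m m).re + (Q m m).re

def dualObjGradient (Pbar : Fin M → ℝ) (V : Fin K → Matrix (Fin M) (Fin M) ℂ)
    (Q : Matrix (Fin M) (Fin M) ℂ) : EuclideanSpace ℝ (Fin M) :=
  (EuclideanSpace.equiv (Fin M) ℝ).symm fun m => txPower V Q m - Pbar m

theorem txPower_nonneg {V : Fin K → Matrix (Fin M) (Fin M) ℂ} {Q : Matrix (Fin M) (Fin M) ℂ}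
    (hV : ∀ k, (V k).PosSemidef) (hQ : Q.PosSemidef) (m : Fin M) : 0 ≤ txPower V Q m := by
  rw [txPower, Complex.re_sum]
  exact add_nonneg (Finset.sum_nonneg fun k _ => (Complex.nonneg_iff.mp (hV k).diag_nonneg).1)
    (Complex.nonneg_iff.mp hQ.diag_nonneg).1

theorem dualObj_eq_add_inner (Pbar : Fin M → ℝ) (y z : EuclideanSpace ℝ (Fin M))
    (V : Fin K → Matrix (Fin M) (Fin M) ℂ) (Q : Matrix (Fin M) (Fin M) ℂ) :
    dualObj Pbar z V Q = dualObj Pbar y V Q + ⟪dualObjGradient Pbar V Q, z - y⟫_ℝ := by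
  simp only [dualObj, dualObjGradient, txPower, PiLp.inner_apply, ← Finset.sum_add_distrib]
  refine Finset.sum_congr rfl fun m _ => ?_
  simp only [Complex.re_sum, PiLp.continuousLinearEquiv_symm_apply, PiLp.sub_apply,
    RCLike.inner_apply, Real.ringHom_apply]
  ring

theorem continuous_dualObj (Pbar : Fin M → ℝ) (x : EuclideanSpace ℝ (Fin M)) :
    Continuous fun q : Covariances M K => dualObj Pbar x q.1 q.2 := by
  unfold dualObj
  fun_prop

theorem continuous_dualObjGradient (Pbar : Fin M → ℝ) :
    Continuous fun q : Covariances M K => dualObjGradient Pbar q.1 q.2 := by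
  unfold dualObjGradient txPower
  fun_prop

theorem dfun_le_dualObj {hvec : Fin K → Fin M → ℂ} {σ γbar : Fin K → ℝ} {Cbar Pbar : Fin M → ℝ}
    {y : EuclideanSpace ℝ (Fin M)} (hy : ∀ m, 0 ≤ y m) {V : Fin K → Matrix (Fin M) (Fin M) ℂ}
    {Q : Matrix (Fin M) (Fin M) ℂ} (hVQ : SubFeasible hvec σ γbar Cbar V Q) :
    dfun hvec σ γbar Cbar Pbar y ≤ dualObj Pbar y V Q := by
  refine csInf_le ⟨-∑ m, y m * Pbar m, ?_⟩ ⟨V, Q, hVQ, rfl⟩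
  rintro _ ⟨V', Q', hVQ', rfl⟩
  rw [← Finset.sum_neg_distrib]
  refine Finset.sum_le_sum fun m _ => ?_
  have := mul_nonneg (by linarith [hy m] : (0 : ℝ) ≤ 1 + y m) (txPower_nonneg hVQ'.1 hVQ'.2.1 m)
  unfold txPower at this
  linarith

theorem txPower_le_of_dualObj_le {Pbar : Fin M → ℝ} {y : EuclideanSpace ℝ (Fin M)}
    (hy : ∀ m, 0 ≤ y m) {V V' : Fin K → Matrix (Fin M) (Fin M) ℂ}
    {Q Q' : Matrix (Fin M) (Fin M) ℂ} (hV : ∀ k, (V k).PosSemidef) (hQ : Q.PosSemidef)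
    (hle : dualObj Pbar y V Q ≤ dualObj Pbar y V' Q') (m : Fin M) :
    txPower V Q m ≤ ∑ j, (1 + y j) * txPower V' Q' j := by
  have hweight : ∀ j, (0 : ℝ) ≤ 1 + y j := fun j => by linarith [hy j]
  have hsum : ∑ j, (1 + y j) * txPower V Q j ≤ ∑ j, (1 + y j) * txPower V' Q' j := by
    simp only [dualObj, Finset.sum_sub_distrib] at hle
    exact sub_le_sub_iff_right _ |>.mp hle
  calc txPower V Q m ≤ (1 + y m) * txPower V Q m :=
        le_mul_of_one_le_left (txPower_nonneg hV hQ m) (by linarith [hy m])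
    _ ≤ ∑ j, (1 + y j) * txPower V Q j :=
        Finset.single_le_sum (fun j _ => mul_nonneg (hweight j) (txPower_nonneg hV hQ j))
          (Finset.mem_univ m)
    _ ≤ _ := hsum

def entryBox (c : ℝ) : Set (Covariances M K) :=
  {q | (∀ k s t, ‖q.1 k s t‖ ≤ c) ∧ ∀ s t, ‖q.2 s t‖ ≤ c}

theorem isCompact_entryBox (c : ℝ) : IsCompact (entryBox (M := M) (K := K) c) := by
  have hbox : IsCompact {A : Matrix (Fin M) (Fin M) ℂ | ∀ s t, ‖A s t‖ ≤ c} := by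
    have hpi : IsCompact (Set.univ.pi fun _ : Fin M => Set.univ.pi fun _ : Fin M =>
        Metric.closedBall (0 : ℂ) c) :=
      isCompact_univ_pi fun _ => isCompact_univ_pi fun _ => isCompact_closedBall 0 c
    show IsCompact {A : Fin M → Fin M → ℂ | ∀ s t, ‖A s t‖ ≤ c}
    convert hpi using 1
    ext A
    simp
  convert (isCompact_univ_pi fun _ : Fin K => hbox).prod hbox using 1
  ext q
  simp [entryBox]

theorem mem_entryBox_of_txPower_le {V : Fin K → Matrix (Fin M) (Fin M) ℂ}
    {Q : Matrix (Fin M) (Fin M) ℂ} (hV : ∀ k, (V k).PosSemidef) (hQ : Q.PosSemidef) {c : ℝ}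
    (hc : ∀ m, txPower V Q m ≤ c) : (V, Q) ∈ entryBox c := by
  have hVre : ∀ k m, 0 ≤ (V k m m).re := fun k m => (Complex.nonneg_iff.mp (hV k).diag_nonneg).1
  have hQre : ∀ m, 0 ≤ (Q m m).re := fun m => (Complex.nonneg_iff.mp hQ.diag_nonneg).1
  refine ⟨fun k => (hV k).norm_apply_le fun m => ?_, hQ.norm_apply_le fun m => ?_⟩
  · show (V k m m).re ≤ c
    have hk : (V k m m).re ≤ ∑ j, (V j m m).re :=
      Finset.single_le_sum (fun j _ => hVre j m) (Finset.mem_univ k)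
    have := hc m
    rw [txPower, Complex.re_sum] at this
    linarith [hQre m]
  · show (Q m m).re ≤ c
    have := hc m
    rw [txPower, Complex.re_sum] at this
    linarith [Finset.sum_nonneg fun j (_ : j ∈ Finset.univ) => hVre j m]

end

theorem stmt15_general {M K : ℕ}
    (hvec : Fin K → Fin M → ℂ) (σ γbar : Fin K → ℝ) (Cbar Pbar : Fin M → ℝ)
    (Vstar : EuclideanSpace ℝ (Fin M) → Fin K → Matrix (Fin M) (Fin M) ℂ)
    (Qstar : EuclideanSpace ℝ (Fin M) → Matrix (Fin M) (Fin M) ℂ)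
    (hattain : ∀ x : EuclideanSpace ℝ (Fin M), (∀ m, 0 ≤ x m) →
      SubFeasible hvec σ γbar Cbar (Vstar x) (Qstar x) ∧
      dualObj Pbar x (Vstar x) (Qstar x) = dfun hvec σ γbar Cbar Pbar x ∧
      (∀ (V : Fin K → Matrix (Fin M) (Fin M) ℂ) (Q : Matrix (Fin M) (Fin M) ℂ),
        SubFeasible hvec σ γbar Cbar V Q →
        dualObj Pbar x V Q = dfun hvec σ γbar Cbar Pbar x →
        V = Vstar x ∧ Q = Qstar x)) :
    ∀ x : EuclideanSpace ℝ (Fin M), (∀ m, 0 ≤ x m) →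
      HasGradientWithinAt (dfun hvec σ γbar Cbar Pbar)
        ((EuclideanSpace.equiv (Fin M) ℝ).symm
          (fun m => (∑ k, Vstar x k m m).re + (Qstar x m m).re - Pbar m))
        {y : EuclideanSpace ℝ (Fin M) | ∀ m, 0 ≤ y m} x := by
  intro x hx
  have hmin : ∀ y : EuclideanSpace ℝ (Fin M), (∀ m, 0 ≤ y m) →
      ∀ q : Covariances M K, SubFeasible hvec σ γbar Cbar q.1 q.2 →
        dualObj Pbar y (Vstar y) (Qstar y) ≤ dualObj Pbar y q.1 q.2 := fun y hy q hq =>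
    (hattain y hy).2.1.trans_le (dfun_le_dualObj hy hq)
  have hnear : ∀ᶠ y in 𝓝[{y | ∀ m, 0 ≤ y m}] x, ∀ j, y j ≤ x j + 1 :=
    nhdsWithin_le_nhds <| eventually_all.mpr fun j =>
      ((PiLp.continuous_apply 2 _ j).continuousAt.eventually_lt continuousAt_const
        (lt_add_one (x j))).mono fun y => le_of_lt
  have hbox : ∀ᶠ y in 𝓝[{y | ∀ m, 0 ≤ y m}] x,
      (Vstar y, Qstar y) ∈ entryBox (∑ j, (2 + x j) * txPower (Vstar x) (Qstar x) j) := by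
    filter_upwards [self_mem_nhdsWithin, hnear] with y hy hyx
    obtain ⟨hVy, hQy, -⟩ := (hattain y hy).1
    refine mem_entryBox_of_txPower_le hVy hQy fun m => (txPower_le_of_dualObj_le hy hVy hQy
      (hmin y hy (Vstar x, Qstar x) (hattain x hx).1) m).trans ?_
    exact Finset.sum_le_sum fun j _ => mul_le_mul_of_nonneg_right (by linarith [hyx j])
      (txPower_nonneg (hattain x hx).1.1 (hattain x hx).1.2.1 j)
  refine hasGradientWithinAt_of_unique_minimizer
    (L := fun y (q : Covariances M K) => dualObj Pbar y q.1 q.2) (p := fun y => (Vstar y, Qstar y))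
    (fun y z q => dualObj_eq_add_inner Pbar y z q.1 q.2) (continuous_dualObj Pbar x)
    (continuous_dualObjGradient Pbar) (isClosed_setOf_subFeasible hvec σ γbar Cbar)
    (isCompact_entryBox _) hx (fun y hy => (hattain y hy).1)
    (fun y hy => isMinOn_iff.mpr (hmin y hy)) (fun y hy => ((hattain y hy).2.1).symm) ?_ hbox
  intro q hq hle
  obtain ⟨hV, hQ⟩ := (hattain x hx).2.2 q.1 q.2 hq
    (le_antisymm (hle.trans_eq (hattain x hx).2.1) (dfun_le_dualObj hx hq))
  exact Prod.ext hV hQ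

/-- differentiability of the dual function: if the SDR problem is strictly
feasible and for every `x ≥ 0` the subproblem defining `d(x)` attains its infimum at a
unique point `(V*(x), Q*(x))`, then `d` is differentiable on the nonnegative orthant
(within the orthant), with `(∇d(x))_m = ∑ₖ V*ₖ(x)^{(m,m)} + Q*(x)^{(m,m)} − P̄_m`. -/
theorem stmt15 {M K : ℕ} (hM : 0 < M) (hK : 0 < K)
    (hvec : Fin K → Fin M → ℂ) (σ γbar : Fin K → ℝ) (Cbar Pbar : Fin M → ℝ)
    (hσ : ∀ k, 0 < σ k) (hγ : ∀ k, 0 < γbar k)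
    (hC : ∀ m, 0 < Cbar m) (hP : ∀ m, 0 < Pbar m)
    (hstrict : SDRStrictFeasible hvec σ γbar Cbar Pbar)
    (Vstar : EuclideanSpace ℝ (Fin M) → Fin K → Matrix (Fin M) (Fin M) ℂ)
    (Qstar : EuclideanSpace ℝ (Fin M) → Matrix (Fin M) (Fin M) ℂ)
    (hattain : ∀ x : EuclideanSpace ℝ (Fin M), (∀ m, 0 ≤ x m) →
      SubFeasible hvec σ γbar Cbar (Vstar x) (Qstar x) ∧
      dualObj Pbar x (Vstar x) (Qstar x) = dfun hvec σ γbar Cbar Pbar x ∧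
      (∀ (V : Fin K → Matrix (Fin M) (Fin M) ℂ) (Q : Matrix (Fin M) (Fin M) ℂ),
        SubFeasible hvec σ γbar Cbar V Q →
        dualObj Pbar x V Q = dfun hvec σ γbar Cbar Pbar x →
        V = Vstar x ∧ Q = Qstar x)) :
    ∀ x : EuclideanSpace ℝ (Fin M), (∀ m, 0 ≤ x m) →
      HasGradientWithinAt (dfun hvec σ γbar Cbar Pbar)
        ((EuclideanSpace.equiv (Fin M) ℝ).symm
          (fun m => (∑ k, Vstar x k m m).re + (Qstar x m m).re - Pbar m))
        {y : EuclideanSpace ℝ (Fin M) | ∀ m, 0 ≤ y m} x :=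
  stmt15_general hvec σ γbar Cbar Pbar Vstar Qstar hattain

end
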